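/- arXiv:1812.00988 — 7 statements merged into one kernel-verified Lean document; each statement's English description precedes it below -/
import Mathlib

section
/- Let p and q be distinct primes with p > q. Then the pq-th cyclotomic polynomial over the integers satisfies Φ_{pq}(X) = 1 + (X - 1) · Σ_{i=0}^{q-1} Σ_{j=1}^{⌊pi/q⌋} X^{pi - qj}. -/
open Polynomial Finset

/-- Telescoping: the inner sum times `X^q - 1`. -/
lemma telescope_aux (q n : ℕ) (hq : 0 < q) :
    (∑ j ∈ Finset.Icc 1 (n / q), (X : ℤ[X]) ^ (n - q * j)) * (X ^ q - 1)
      = X ^ n - X ^ (n % q) := by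
  have hIcc : Finset.Icc 1 (n / q) = Finset.Ico 1 (n / q + 1) := by
    rw [Finset.Ico_add_one_right_eq_Icc]
  rw [hIcc, Finset.sum_Ico_eq_sum_range]
  simp only [Nat.add_sub_cancel]
  rw [Finset.sum_mul]
  have hterm : ∀ k ∈ Finset.range (n / q),
      (X : ℤ[X]) ^ (n - q * (1 + k)) * (X ^ q - 1)
        = X ^ (n - q * k) - X ^ (n - q * (k + 1)) := by
    intro k hk
    rw [Finset.mem_range] at hk
    have hk1 : k + 1 ≤ n / q := hk
    have hle : q * (k + 1) ≤ n :=
      le_trans (Nat.mul_le_mul_left q hk1) (by rw [mul_comm]; exact Nat.div_mul_le_self n q)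
    have hsplit : q * (k + 1) = q * k + q := by ring
    have h1 : 1 + k = k + 1 := by ring
    rw [h1, mul_sub, mul_one, ← pow_add]
    congr 2
    omega
  rw [Finset.sum_congr rfl hterm, Finset.sum_range_sub' (fun k => (X : ℤ[X]) ^ (n - q * k))]
  have h0 : n - q * 0 = n := by simp
  have hmd : n % q + q * (n / q) = n := Nat.mod_add_div n q
  have hm : n - q * (n / q) = n % q := by omega
  rw [h0, hm]

/-- Reindexing the residues `p * i % q` for `i < q` when `p` is coprime to `q`. -/
lemma residues_aux (p q : ℕ) (hpq : Nat.Coprime p q) (hq : 1 < q) :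
    ∑ i ∈ Finset.range q, (X : ℤ[X]) ^ (p * i % q) = ∑ i ∈ Finset.range q, X ^ i := by
  obtain ⟨b, -, hb⟩ := Nat.exists_mul_mod_eq_one_of_coprime hpq hq
  have key : ∀ m : ℕ, m < q → b * (p * m % q) % q = m ∧ p * (b * m % q) % q = m := by
    intro m hm
    constructor
    · calc b * (p * m % q) % q = (p * m % q) * b % q := by rw [mul_comm]
        _ = (p * m) * b % q := Nat.mod_mul_mod _ _ _
        _ = (p * b % q) * m % q := by rw [Nat.mod_mul_mod]; ring_nf
        _ = m := by rw [hb, one_mul, Nat.mod_eq_of_lt hm]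
    · calc p * (b * m % q) % q = (b * m % q) * p % q := by rw [mul_comm]
        _ = (b * m) * p % q := Nat.mod_mul_mod _ _ _
        _ = (p * b % q) * m % q := by rw [Nat.mod_mul_mod]; ring_nf
        _ = m := by rw [hb, one_mul, Nat.mod_eq_of_lt hm]
  refine Finset.sum_nbij' (fun i => p * i % q) (fun r => b * r % q) ?_ ?_ ?_ ?_ ?_
  · intro i _
    exact Finset.mem_range.mpr (Nat.mod_lt _ (by omega))
  · intro r _
    exact Finset.mem_range.mpr (Nat.mod_lt _ (by omega))
  · intro i hi
    exact (key i (Finset.mem_range.mp hi)).1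
  · intro r hr
    exact (key r (Finset.mem_range.mp hr)).2
  · intro i _
    rfl

theorem stmt_0 (p q : ℕ) (hp : p.Prime) (hq : q.Prime) (hgt : p > q) :
    Polynomial.cyclotomic (p * q) ℤ =
      1 + (X - 1) *
        ∑ i ∈ Finset.range q, ∑ j ∈ Finset.Icc 1 (p * i / q), (X : ℤ[X]) ^ (p * i - q * j) := by
  have hpq : p ≠ q := Nat.ne_of_gt hgt
  have hcop : Nat.Coprime p q := (Nat.coprime_primes hp hq).mpr hpq
  have hdiv : ¬ p ∣ q := by
    intro h
    exact hpq ((Nat.prime_dvd_prime_iff_eq hp hq).mp h)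
  haveI : Fact q.Prime := ⟨hq⟩
  -- key: cyclotomic (p*q) * (∑ X^i) = ∑ X^(p*i)
  have hkey : cyclotomic (p * q) ℤ * ∑ i ∈ Finset.range q, (X : ℤ[X]) ^ i
      = ∑ i ∈ Finset.range q, (X : ℤ[X]) ^ (p * i) := by
    have := cyclotomic_expand_eq_cyclotomic_mul hp hdiv ℤ
    rw [cyclotomic_prime ℤ q] at this
    rw [mul_comm q p] at this
    rw [← this]
    rw [map_sum]
    refine Finset.sum_congr rfl fun i _ => ?_
    rw [map_pow, Polynomial.expand_X, ← pow_mul]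
  -- the combinatorial side
  set S := ∑ i ∈ Finset.range q, ∑ j ∈ Finset.Icc 1 (p * i / q), (X : ℤ[X]) ^ (p * i - q * j)
    with hS
  have hcomb : (1 + (X - 1) * S) * ∑ i ∈ Finset.range q, (X : ℤ[X]) ^ i
      = ∑ i ∈ Finset.range q, (X : ℤ[X]) ^ (p * i) := by
    have hgeom : (X - 1 : ℤ[X]) * ∑ i ∈ Finset.range q, (X : ℤ[X]) ^ i = X ^ q - 1 := by
      rw [mul_comm, geom_sum_mul]
    have hSq : S * (X ^ q - 1)
        = ∑ i ∈ Finset.range q, ((X : ℤ[X]) ^ (p * i) - X ^ (p * i % q)) := by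
      rw [hS, Finset.sum_mul]
      exact Finset.sum_congr rfl fun i _ => telescope_aux q (p * i) hq.pos
    have hres := residues_aux p q hcop hq.one_lt
    rw [add_mul, one_mul, mul_assoc, mul_left_comm, hgeom, hSq,
      Finset.sum_sub_distrib, hres]
    ring
  -- cancel the nonzero factor
  have hne : (∑ i ∈ Finset.range q, (X : ℤ[X]) ^ i) ≠ 0 := by
    intro h
    have h1 := congrArg (Polynomial.eval 1) h
    simp at h1
    exact hq.ne_zero h1
  have := hkey.trans hcomb.symm
  exact mul_right_cancel₀ hne this
end

section
/- Let a and b be natural numbers with a coprime to b and a > b. Then, as polynomials with integer coefficients, X^{ab} - 1 = (X - 1) · (Σ_{i=0}^{a-1} X^i) · (Σ_{i=0}^{b-1} X^i) · (1 + (X - 1) · Σ_{i=0}^{b-1} Σ_{j=1}^{⌊ai/b⌋} X^{ai - bj}). -/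
open Polynomial Finset

lemma tele_aux (c b : ℕ) : ∀ m, b * m ≤ c →
    ((X : ℤ[X]) ^ b - 1) * ∑ j ∈ Finset.Icc 1 m, (X : ℤ[X]) ^ (c - b * j)
      = X ^ c - X ^ (c - b * m) := by
  intro m
  induction m with
  | zero => simp
  | succ m ih =>
    intro h
    have hm : b * m ≤ c := le_trans (Nat.mul_le_mul_left b (Nat.le_succ m)) h
    rw [Finset.sum_Icc_succ_top (by omega), mul_add, ih hm, sub_one_mul]
    have hx : (X : ℤ[X]) ^ b * X ^ (c - b * (m + 1)) = X ^ (c - b * m) := by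
      rw [← pow_add]
      congr 1
      simp only [Nat.mul_succ] at h ⊢
      omega
    rw [hx]
    ring

theorem stmt_1 (a b : ℕ) (hab : Nat.Coprime a b) (hgt : a > b) :
    (X : ℤ[X]) ^ (a * b) - 1 =
      (X - 1) * (∑ i ∈ Finset.range a, (X : ℤ[X]) ^ i) * (∑ i ∈ Finset.range b, (X : ℤ[X]) ^ i) *
        (1 + (X - 1) *
          ∑ i ∈ Finset.range b, ∑ j ∈ Finset.Icc 1 (a * i / b), (X : ℤ[X]) ^ (a * i - b * j)) := by
  set A := ∑ i ∈ Finset.range a, (X : ℤ[X]) ^ i with hA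
  set B := ∑ i ∈ Finset.range b, (X : ℤ[X]) ^ i with hB
  set T := ∑ i ∈ Finset.range b, ∑ j ∈ Finset.Icc 1 (a * i / b), (X : ℤ[X]) ^ (a * i - b * j)
    with hT
  have hXne : (X : ℤ[X]) - 1 ≠ 0 := by
    have h := X_sub_C_ne_zero (1 : ℤ)
    rwa [map_one] at h
  have key1 : ((X : ℤ[X]) - 1) * A = X ^ a - 1 := by
    rw [hA, mul_comm]; exact geom_sum_mul X a
  have key2 : ((X : ℤ[X]) - 1) * B = X ^ b - 1 := by
    rw [hB, mul_comm]; exact geom_sum_mul X b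
  have keyab : ((X : ℤ[X]) ^ a - 1) * (∑ i ∈ Finset.range b, (X : ℤ[X]) ^ (a * i))
      = X ^ (a * b) - 1 := by
    have h := geom_sum_mul ((X : ℤ[X]) ^ a) b
    simp only [← pow_mul] at h
    rw [mul_comm] at h
    exact h
  -- telescoping: (X^b - 1) * T = Σ X^(a i) - Σ X^(a i % b)
  have tsum : ((X : ℤ[X]) ^ b - 1) * T
      = (∑ i ∈ Finset.range b, (X : ℤ[X]) ^ (a * i)) - B := by
    rw [hT, Finset.mul_sum]
    have hterm : ∀ i ∈ Finset.range b,
        ((X : ℤ[X]) ^ b - 1) * ∑ j ∈ Finset.Icc 1 (a * i / b), (X : ℤ[X]) ^ (a * i - b * j)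
          = X ^ (a * i) - X ^ (a * i % b) := by
      intro i _
      have h1 : a * i % b + b * (a * i / b) = a * i := Nat.mod_add_div _ _
      have h2 := tele_aux (a * i) b (a * i / b) (by omega)
      rw [h2]
      congr 2
      omega
    rw [Finset.sum_congr rfl hterm, Finset.sum_sub_distrib]
    congr 1
    -- bijection i ↦ a*i % b on range b
    rcases Nat.eq_zero_or_pos b with hb | hb
    · subst hb; simp [hB]
    · have hinj : ∀ x ∈ Finset.range b, ∀ y ∈ Finset.range b,
          a * x % b = a * y % b → x = y := by
        intro x hx y hy hxy
        simp only [Finset.mem_range] at hx hy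
        have hmod : x ≡ y [MOD b] := Nat.ModEq.cancel_left_of_coprime hab.symm hxy
        have := hmod
        unfold Nat.ModEq at this
        rw [Nat.mod_eq_of_lt hx, Nat.mod_eq_of_lt hy] at this
        exact this
      have himg : (Finset.range b).image (fun i => a * i % b) = Finset.range b := by
        apply Finset.eq_of_subset_of_card_le
        · intro x hx
          simp only [Finset.mem_image, Finset.mem_range] at hx ⊢
          obtain ⟨i, _, rfl⟩ := hx
          exact Nat.mod_lt _ hb
        · rw [Finset.card_image_of_injOn (fun x hx y hy => hinj x hx y hy)]
      calc ∑ i ∈ Finset.range b, (X : ℤ[X]) ^ (a * i % b)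
          = ∑ k ∈ (Finset.range b).image (fun i => a * i % b), (X : ℤ[X]) ^ k :=
            (Finset.sum_image hinj).symm
        _ = B := by rw [himg, hB]
  apply mul_left_cancel₀ hXne
  have step : ((X : ℤ[X]) - 1) * ((X - 1) * A * B * (1 + (X - 1) * T))
      = ((X - 1) * A) * ((X - 1) * B) + ((X - 1) * A) * ((X - 1) * (((X - 1) * B) * T)) := by
    ring
  rw [step, key1, key2, tsum]
  linear_combination (-((X : ℤ[X]) - 1)) * keyab + ((X : ℤ[X]) ^ a - 1) * key2
end

section
/- Let p and q be distinct primes, and let r and s be nonnegative integers with r·p + s·q = (p-1)(q-1) such that (s+1)·q ≡ 1 (mod p) and (r+1)·p ≡ 1 (mod q). Then r = [p^{q-2}]_q − 1 and s = [q^{p-2}]_p − 1. -/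
lemma key_aux (p q a : ℕ) (hp : p.Prime) (hq : q.Prime) (hpq : p ≠ q)
    (ha : a + 1 < q) (h : (a + 1) * p ≡ 1 [MOD q]) :
    a = p ^ (q - 2) % q - 1 := by
  have hq1 : Fact q.Prime := ⟨hq⟩
  have hne : (p : ZMod q) ≠ 0 := by
    rw [Ne, ZMod.natCast_eq_zero_iff]
    intro hdvd
    exact hpq ((Nat.prime_dvd_prime_iff_eq hq hp).mp hdvd).symm
  have h1 : ((a + 1 : ℕ) : ZMod q) * p = 1 := by
    have := (Nat.ModEq.symm h)
    have := (ZMod.natCast_eq_natCast_iff _ _ _).mpr h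
    push_cast at this ⊢
    linear_combination this
  have h2 : ((p : ZMod q)) ^ (q - 2) * p = 1 := by
    have : (p : ZMod q) ^ (q - 2) * p = (p : ZMod q) ^ (q - 1) := by
      rw [← pow_succ]
      congr 1
      omega
    rw [this, ZMod.pow_card_sub_one_eq_one hne]
  have h3 : ((a + 1 : ℕ) : ZMod q) = (p : ZMod q) ^ (q - 2) := by
    push_cast at h1 ⊢
    exact mul_right_cancel₀ hne (h1.trans h2.symm)
  have h4 : a + 1 = p ^ (q - 2) % q := by
    have := h3
    rw [← Nat.cast_pow, ← ZMod.natCast_mod (p ^ (q - 2)) q] at this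
    have h5 := (ZMod.natCast_eq_natCast_iff _ _ _).mp this
    have h6 : (a + 1) % q = a + 1 := Nat.mod_eq_of_lt ha
    have h7 : (p ^ (q - 2) % q) % q = p ^ (q - 2) % q := Nat.mod_mod_of_dvd _ dvd_rfl
    unfold Nat.ModEq at h5
    omega
  omega

theorem stmt_7 (p q : ℕ) (hp : p.Prime) (hq : q.Prime) (hpq : p ≠ q)
    (r s : ℕ) (hrs : r * p + s * q = (p - 1) * (q - 1))
    (hs : (s + 1) * q ≡ 1 [MOD p]) (hr : (r + 1) * p ≡ 1 [MOD q]) :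
    r = p ^ (q - 2) % q - 1 ∧ s = q ^ (p - 2) % p - 1 := by
  have hp2 := hp.two_le
  have hq2 := hq.two_le
  obtain ⟨p', rfl⟩ : ∃ p', p = p' + 2 := ⟨p - 2, by omega⟩
  obtain ⟨q', rfl⟩ : ∃ q', q = q' + 2 := ⟨q - 2, by omega⟩
  have hrs' : r * (p' + 2) + s * (q' + 2) = (p' + 1) * (q' + 1) := by
    have e1 : p' + 2 - 1 = p' + 1 := by omega
    have e2 : q' + 2 - 1 = q' + 1 := by omega
    rw [e1, e2] at hrs; exact hrs
  have hrlt : r + 1 < q' + 2 := by nlinarith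
  have hslt : s + 1 < p' + 2 := by nlinarith
  exact ⟨key_aux _ _ r hp hq hpq hrlt hr, key_aux _ _ s hq hp hpq.symm hslt hs⟩
end

section
/- Let p and q be distinct primes, let λ and μ be natural numbers with 0 < λ < q, 0 < μ < p, λ·p ≡ 1 (mod q) and μ·q ≡ 1 (mod p). Then, as polynomials with integer coefficients, Φ_{pq}(X) = Σ_{i=0}^{λ-1} Σ_{j=0}^{μ-1} X^{ip+jq} − Σ_{i=λ}^{q-1} Σ_{j=μ}^{p-1} X^{ip+jq−pq}. -/
open Polynomial Finset

private lemma aux_poly_id (x : ℤ[X]) (c d : ℕ) :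
    (x ^ (d + 1) - 1) * (x ^ (c + 1) - 1) - x * ((x ^ c - 1) * (x ^ d - 1)) =
      (x ^ (d + 1 + c) - 1) * (x - 1) := by ring

private lemma aux_geom (n k : ℕ) :
    (∑ i ∈ Finset.range n, (X : ℤ[X]) ^ (i * k)) * ((X : ℤ[X]) ^ k - 1)
      = (X : ℤ[X]) ^ (n * k) - 1 := by
  have h := geom_sum_mul ((X : ℤ[X]) ^ k) n
  simpa [← pow_mul, mul_comm] using h

theorem stmt_8 (p q : ℕ) (hp : p.Prime) (hq : q.Prime) (hpq : p ≠ q)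
    (l m : ℕ) (hl0 : 0 < l) (hlq : l < q) (hm0 : 0 < m) (hmp : m < p)
    (hl : l * p ≡ 1 [MOD q]) (hm : m * q ≡ 1 [MOD p]) :
    Polynomial.cyclotomic (p * q) ℤ =
      (∑ i ∈ Finset.range l, ∑ j ∈ Finset.range m, (X : ℤ[X]) ^ (i * p + j * q)) -
        ∑ i ∈ Finset.Icc l (q - 1), ∑ j ∈ Finset.Icc m (p - 1),
          (X : ℤ[X]) ^ (i * p + j * q - p * q) := by
  have hp0 : 0 < p := hp.pos
  have hq0 : 0 < q := hq.pos
  have hp1 : 1 < p := hp.one_lt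
  have hq1 : 1 < q := hq.one_lt
  have hqp : q * p = p * q := Nat.mul_comm q p
  have hlp : p ≤ l * p := Nat.le_mul_of_pos_left p hl0
  have hmq : q ≤ m * q := Nat.le_mul_of_pos_left q hm0
  -- key arithmetic fact : l*p + m*q = p*q + 1
  have hkey : l * p + m * q = p * q + 1 := by
    have hcop : Nat.Coprime q p := (Nat.coprime_primes hq hp).mpr (fun h => hpq h.symm)
    have h2 : m * q ≡ 0 [MOD q] := Nat.modEq_zero_iff_dvd.mpr (dvd_mul_left q m)
    have h3 : l * p ≡ 0 [MOD p] := Nat.modEq_zero_iff_dvd.mpr (dvd_mul_left p l)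
    have hq' : l * p + m * q ≡ 1 [MOD q] := by simpa using hl.add h2
    have hp' : l * p + m * q ≡ 1 [MOD p] := by simpa using h3.add hm
    have h : l * p + m * q ≡ 1 [MOD q * p] :=
      (Nat.modEq_and_modEq_iff_modEq_mul hcop).mp ⟨hq', hp'⟩
    have hdvd : q * p ∣ l * p + m * q - 1 := (Nat.modEq_iff_dvd' (by omega)).mp h.symm
    have hb1 : l * p ≤ (q - 1) * p := Nat.mul_le_mul_right p (by omega)
    have hb2 : m * q ≤ (p - 1) * q := Nat.mul_le_mul_right q (by omega)
    have e1 : (q - 1) * p = p * q - p := by rw [Nat.sub_one_mul, hqp]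
    have e2 : (p - 1) * q = p * q - q := Nat.sub_one_mul p q
    have hple : p ≤ p * q := Nat.le_mul_of_pos_right p hq0
    have hqle : q ≤ p * q := Nat.le_mul_of_pos_left q hp0
    have heq : l * p + m * q - 1 = q * p :=
      Nat.eq_of_dvd_of_lt_two_mul (by omega) hdvd (by omega)
    omega
  -- exponent simplification for the second sum
  have hexp : ∀ i j : ℕ, (l + i) * p + (m + j) * q - p * q = i * p + j * q + 1 := by
    intro i j
    rw [add_mul, add_mul]
    omega
  -- nonzero divisors
  have hXp : ((X : ℤ[X]) ^ p - 1) ≠ 0 := by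
    have h := (monic_X_pow_sub_C (1 : ℤ) hp0.ne').ne_zero
    simpa using h
  have hXq : ((X : ℤ[X]) ^ q - 1) ≠ 0 := by
    have h := (monic_X_pow_sub_C (1 : ℤ) hq0.ne').ne_zero
    simpa using h
  apply mul_right_cancel₀ (mul_ne_zero hXp hXq)
  -- the cyclotomic side
  have hdiv : (p * q).divisors = {1, p, q, p * q} := by
    rw [Nat.divisors_mul, hp.divisors, hq.divisors]
    ext x
    simp only [Finset.mem_mul, Finset.mem_insert, Finset.mem_singleton]
    constructor
    · rintro ⟨a, (rfl | rfl), b, (rfl | rfl), rfl⟩ <;> simp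
    · rintro (rfl | rfl | rfl | rfl)
      · exact ⟨1, Or.inl rfl, 1, Or.inl rfl, mul_one 1⟩
      · exact ⟨_, Or.inr rfl, 1, Or.inl rfl, mul_one _⟩
      · exact ⟨1, Or.inl rfl, _, Or.inr rfl, one_mul _⟩
      · exact ⟨_, Or.inr rfl, _, Or.inr rfl, rfl⟩
  have hppq : p < p * q := (Nat.lt_mul_iff_one_lt_right hp0).mpr hq1
  have hqpq : q < p * q := (Nat.lt_mul_iff_one_lt_left hq0).mpr hp1
  have hprodpq := prod_cyclotomic_eq_X_pow_sub_one (Nat.mul_pos hp0 hq0) ℤ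
  rw [hdiv] at hprodpq
  have hn1 : (1 : ℕ) ∉ ({p, q, p * q} : Finset ℕ) := by
    simp only [Finset.mem_insert, Finset.mem_singleton]
    push_neg
    exact ⟨by omega, by omega, by omega⟩
  have hn2 : p ∉ ({q, p * q} : Finset ℕ) := by
    simp only [Finset.mem_insert, Finset.mem_singleton]
    push_neg
    exact ⟨hpq, by omega⟩
  have hn3 : q ∉ ({p * q} : Finset ℕ) := by
    simp only [Finset.mem_singleton]
    omega
  rw [Finset.prod_insert hn1, Finset.prod_insert hn2, Finset.prod_insert hn3,
      Finset.prod_singleton] at hprodpq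
  have hP := prod_cyclotomic_eq_X_pow_sub_one hp0 ℤ
  rw [hp.divisors, Finset.prod_insert (by simp only [Finset.mem_singleton]; omega),
      Finset.prod_singleton] at hP
  have hQ := prod_cyclotomic_eq_X_pow_sub_one hq0 ℤ
  rw [hq.divisors, Finset.prod_insert (by simp only [Finset.mem_singleton]; omega),
      Finset.prod_singleton] at hQ
  have hone : cyclotomic 1 ℤ = X - 1 := cyclotomic_one ℤ
  have hcyc : cyclotomic (p * q) ℤ * (((X : ℤ[X]) ^ p - 1) * ((X : ℤ[X]) ^ q - 1)) =
      ((X : ℤ[X]) ^ (p * q) - 1) * ((X : ℤ[X]) - 1) := by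
    rw [← hP, ← hQ, ← hprodpq, ← hone]
    ring
  rw [hcyc]
  -- the sum side
  have hS1 : (∑ i ∈ Finset.range l, ∑ j ∈ Finset.range m, (X : ℤ[X]) ^ (i * p + j * q)) =
      (∑ i ∈ Finset.range l, (X : ℤ[X]) ^ (i * p)) *
        (∑ j ∈ Finset.range m, (X : ℤ[X]) ^ (j * q)) := by
    rw [Finset.sum_mul_sum]
    simp_rw [← pow_add]
  have hS2 : (∑ i ∈ Finset.Icc l (q - 1), ∑ j ∈ Finset.Icc m (p - 1),
        (X : ℤ[X]) ^ (i * p + j * q - p * q)) =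
      X * ((∑ i ∈ Finset.range (q - l), (X : ℤ[X]) ^ (i * p)) *
        (∑ j ∈ Finset.range (p - m), (X : ℤ[X]) ^ (j * q))) := by
    have hIq : Finset.Icc l (q - 1) = Finset.Ico l q := by
      rw [← Finset.Ico_add_one_right_eq_Icc]; congr 1; omega
    have hIp : Finset.Icc m (p - 1) = Finset.Ico m p := by
      rw [← Finset.Ico_add_one_right_eq_Icc]; congr 1; omega
    rw [hIq, hIp, Finset.sum_Ico_eq_sum_range]
    simp_rw [Finset.sum_Ico_eq_sum_range, hexp]
    rw [Finset.sum_mul_sum, Finset.mul_sum]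
    apply Finset.sum_congr rfl
    intro i _
    rw [Finset.mul_sum]
    apply Finset.sum_congr rfl
    intro j _
    rw [← pow_add, ← pow_succ']
  symm
  rw [hS1, hS2, sub_mul]
  obtain ⟨d, hd⟩ : ∃ d, l * p = d + 1 := ⟨l * p - 1, by omega⟩
  obtain ⟨c, hc⟩ : ∃ c, m * q = c + 1 := ⟨m * q - 1, by omega⟩
  have e1 : (q - l) * p = c := by rw [Nat.sub_mul, hqp]; omega
  have e2 : (p - m) * q = d := by rw [Nat.sub_mul, Nat.mul_comm p q]; omega
  have e3 : p * q = d + 1 + c := by omega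
  calc (∑ i ∈ Finset.range l, (X : ℤ[X]) ^ (i * p)) *
          (∑ j ∈ Finset.range m, (X : ℤ[X]) ^ (j * q)) *
          (((X : ℤ[X]) ^ p - 1) * ((X : ℤ[X]) ^ q - 1)) -
        X * ((∑ i ∈ Finset.range (q - l), (X : ℤ[X]) ^ (i * p)) *
          (∑ j ∈ Finset.range (p - m), (X : ℤ[X]) ^ (j * q))) *
          (((X : ℤ[X]) ^ p - 1) * ((X : ℤ[X]) ^ q - 1))
      = ((∑ i ∈ Finset.range l, (X : ℤ[X]) ^ (i * p)) * ((X : ℤ[X]) ^ p - 1)) *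
          ((∑ j ∈ Finset.range m, (X : ℤ[X]) ^ (j * q)) * ((X : ℤ[X]) ^ q - 1)) -
        X * (((∑ i ∈ Finset.range (q - l), (X : ℤ[X]) ^ (i * p)) * ((X : ℤ[X]) ^ p - 1)) *
          ((∑ j ∈ Finset.range (p - m), (X : ℤ[X]) ^ (j * q)) * ((X : ℤ[X]) ^ q - 1))) := by
        ring
    _ = ((X : ℤ[X]) ^ (l * p) - 1) * ((X : ℤ[X]) ^ (m * q) - 1) -
        X * (((X : ℤ[X]) ^ ((q - l) * p) - 1) * ((X : ℤ[X]) ^ ((p - m) * q) - 1)) := by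
        rw [aux_geom, aux_geom, aux_geom, aux_geom]
    _ = ((X : ℤ[X]) ^ (p * q) - 1) * ((X : ℤ[X]) - 1) := by
        rw [hd, hc, e1, e2, e3]
        exact aux_poly_id X c d
end

section
/- Let p and q be distinct primes. Then, as polynomials with integer coefficients, Φ_{pq}(X) = Σ_{i=0}^{[p^{q-2}]_q − 1} Σ_{j=0}^{[q^{p-2}]_p − 1} X^{ip+jq} − Σ_{i=[p^{q-2}]_q}^{q-1} Σ_{j=[q^{p-2}]_p}^{p-1} X^{ip+jq−pq}. -/
open Polynomial Finset

lemma key_ab {p q : ℕ} (hp : p.Prime) (hq : q.Prime) (hpq : p ≠ q) :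
    (p ^ (q - 2) % q) * p + (q ^ (p - 2) % p) * q = p * q + 1 := by
  set a := p ^ (q - 2) % q with ha
  set b := q ^ (p - 2) % p with hb
  have hq2 := hq.two_le
  have hp2 := hp.two_le
  have hqdp : ¬ q ∣ p := fun h => hpq ((Nat.prime_dvd_prime_iff_eq hq hp).mp h).symm
  have hpdq : ¬ p ∣ q := fun h => hpq ((Nat.prime_dvd_prime_iff_eq hp hq).mp h)
  haveI : Fact q.Prime := ⟨hq⟩
  haveI : Fact p.Prime := ⟨hp⟩
  have hpu : ((p : ZMod q)) ≠ 0 := by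
    simpa [ZMod.natCast_eq_zero_iff] using hqdp
  have hqu : ((q : ZMod p)) ≠ 0 := by
    simpa [ZMod.natCast_eq_zero_iff] using hpdq
  have h1 : ((a * p : ℕ) : ZMod q) = ((1 : ℕ) : ZMod q) := by
    rw [ha]
    push_cast [ZMod.natCast_mod]
    rw [← pow_succ, show q - 2 + 1 = q - 1 by omega, ZMod.pow_card_sub_one_eq_one hpu]
  have h2 : ((b * q : ℕ) : ZMod p) = ((1 : ℕ) : ZMod p) := by
    rw [hb]
    push_cast [ZMod.natCast_mod]
    rw [← pow_succ, show p - 2 + 1 = p - 1 by omega, ZMod.pow_card_sub_one_eq_one hqu]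
  have hm1 : a * p + b * q ≡ 1 [MOD q] := by
    rw [← ZMod.natCast_eq_natCast_iff]
    push_cast
    push_cast at h1
    rw [ZMod.natCast_self]
    simpa using h1
  have hm2 : a * p + b * q ≡ 1 [MOD p] := by
    rw [← ZMod.natCast_eq_natCast_iff]
    push_cast
    push_cast at h2
    rw [ZMod.natCast_self]
    simpa using h2
  have hcop : Nat.Coprime p q := (Nat.coprime_primes hp hq).mpr hpq
  have hm : a * p + b * q ≡ 1 [MOD p * q] :=
    (Nat.modEq_and_modEq_iff_modEq_mul hcop).mp ⟨hm2, hm1⟩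
  have ha1 : a ≠ 0 := by
    intro h0
    exact hqdp (hq.dvd_of_dvd_pow (Nat.dvd_of_mod_eq_zero h0))
  have hb1 : b ≠ 0 := by
    intro h0
    exact hpdq (hp.dvd_of_dvd_pow (Nat.dvd_of_mod_eq_zero h0))
  have haq : a < q := Nat.mod_lt _ (by omega)
  have hbp : b < p := Nat.mod_lt _ (by omega)
  set N := a * p + b * q with hN
  have hN2 : 2 ≤ N := by
    have : p ≤ a * p := Nat.le_mul_of_pos_left p (by omega)
    omega
  have hNlt : N < 2 * (p * q) := by
    have h1 : a * p < p * q := by nlinarith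
    have h2 : b * q < p * q := by nlinarith
    omega
  have hd : p * q ∣ N - 1 := (Nat.modEq_iff_dvd' (by omega)).mp hm.symm
  obtain ⟨k, hk⟩ := hd
  have hk1 : k = 1 := by
    have hklt : k < 2 := by
      by_contra hc
      push_neg at hc
      have : p * q * 2 ≤ p * q * k := Nat.mul_le_mul_left _ hc
      omega
    have hk0 : k ≠ 0 := by
      intro h0
      rw [h0, Nat.mul_zero] at hk
      omega
    omega
  rw [hk1, Nat.mul_one] at hk
  omega

lemma cyc_mul {p q : ℕ} (hp : p.Prime) (hq : q.Prime) (hpq : p ≠ q) :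
    Polynomial.cyclotomic (p * q) ℤ * (((X : ℤ[X]) ^ p - 1) * ((X : ℤ[X]) ^ q - 1)) =
      ((X : ℤ[X]) ^ (p * q) - 1) * ((X : ℤ[X]) - 1) := by
  haveI : Fact q.Prime := ⟨hq⟩
  have hpdq : ¬ p ∣ q := fun h => hpq ((Nat.prime_dvd_prime_iff_eq hp hq).mp h)
  have he := cyclotomic_expand_eq_cyclotomic_mul (R := ℤ) hp hpdq
  have hexp : (expand ℤ p) ((X : ℤ[X]) ^ q - 1) = (X : ℤ[X]) ^ (p * q) - 1 := by
    rw [map_sub, map_one, map_pow, expand_X, ← pow_mul]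
  have hq1 : Polynomial.cyclotomic q ℤ * ((X : ℤ[X]) - 1) = (X : ℤ[X]) ^ q - 1 :=
    cyclotomic_prime_mul_X_sub_one ℤ q
  have hXp : ((X : ℤ[X]) ^ p - 1) = (expand ℤ p) ((X : ℤ[X]) - 1) := by
    rw [map_sub, map_one, expand_X]
  calc Polynomial.cyclotomic (p * q) ℤ * (((X : ℤ[X]) ^ p - 1) * ((X : ℤ[X]) ^ q - 1))
      = (Polynomial.cyclotomic (q * p) ℤ * Polynomial.cyclotomic q ℤ) *
          (((X : ℤ[X]) ^ p - 1) * ((X : ℤ[X]) - 1)) := by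
        rw [mul_comm q p, ← hq1]; try ring
    _ = (expand ℤ p) (Polynomial.cyclotomic q ℤ) * ((expand ℤ p) ((X : ℤ[X]) - 1) *
          ((X : ℤ[X]) - 1)) := by
        rw [← he, hXp]
        try ring
    _ = (expand ℤ p) (Polynomial.cyclotomic q ℤ * ((X : ℤ[X]) - 1)) * ((X : ℤ[X]) - 1) := by
        rw [map_mul]; try ring
    _ = ((X : ℤ[X]) ^ (p * q) - 1) * ((X : ℤ[X]) - 1) := by rw [hq1, hexp]

theorem stmt_9 (p q : ℕ) (hp : p.Prime) (hq : q.Prime) (hpq : p ≠ q) :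
    Polynomial.cyclotomic (p * q) ℤ =
      (∑ i ∈ Finset.range (p ^ (q - 2) % q), ∑ j ∈ Finset.range (q ^ (p - 2) % p),
          (X : ℤ[X]) ^ (i * p + j * q)) -
        ∑ i ∈ Finset.Icc (p ^ (q - 2) % q) (q - 1), ∑ j ∈ Finset.Icc (q ^ (p - 2) % p) (p - 1),
          (X : ℤ[X]) ^ (i * p + j * q - p * q) := by
  have hp2 := hp.two_le
  have hq2 := hq.two_le
  set a := p ^ (q - 2) % q with ha
  set b := q ^ (p - 2) % p with hb
  have hAB : a * p + b * q = p * q + 1 := key_ab hp hq hpq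
  have haq : a < q := Nat.mod_lt _ (by omega)
  have hbp : b < p := Nat.mod_lt _ (by omega)
  -- nonzero multiplier
  have hXp : ((X : ℤ[X]) ^ p - 1) ≠ 0 := fun h => by
    have := congrArg (Polynomial.eval (0 : ℤ)) h
    simp [zero_pow (by omega : p ≠ 0)] at this
  have hXq : ((X : ℤ[X]) ^ q - 1) ≠ 0 := fun h => by
    have := congrArg (Polynomial.eval (0 : ℤ)) h
    simp [zero_pow (by omega : q ≠ 0)] at this
  have hXpq : ((X : ℤ[X]) ^ (p * q)) ≠ 0 := pow_ne_zero _ X_ne_zero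
  have hM : (((X : ℤ[X]) ^ p - 1) * ((X : ℤ[X]) ^ q - 1)) * (X : ℤ[X]) ^ (p * q) ≠ 0 :=
    mul_ne_zero (mul_ne_zero hXp hXq) hXpq
  apply mul_right_cancel₀ hM
  -- key equations
  have hcyc := cyc_mul hp hq hpq
  have hS1' : (∑ i ∈ Finset.range a, ∑ j ∈ Finset.range b, (X : ℤ[X]) ^ (i * p + j * q)) *
      (((X : ℤ[X]) ^ p - 1) * ((X : ℤ[X]) ^ q - 1)) =
      ((X : ℤ[X]) ^ (a * p) - 1) * ((X : ℤ[X]) ^ (b * q) - 1) := by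
    have h1 : (∑ i ∈ Finset.range a, ∑ j ∈ Finset.range b, (X : ℤ[X]) ^ (i * p + j * q)) =
        (∑ i ∈ Finset.range a, ((X : ℤ[X]) ^ p) ^ i) *
          (∑ j ∈ Finset.range b, ((X : ℤ[X]) ^ q) ^ j) := by
      rw [Finset.sum_mul_sum]
      refine Finset.sum_congr rfl fun i _ => Finset.sum_congr rfl fun j _ => ?_
      rw [pow_add, ← pow_mul, ← pow_mul, mul_comm p i, mul_comm q j]
    rw [h1, show (∑ i ∈ Finset.range a, ((X : ℤ[X]) ^ p) ^ i) *
          (∑ j ∈ Finset.range b, ((X : ℤ[X]) ^ q) ^ j) *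
          (((X : ℤ[X]) ^ p - 1) * ((X : ℤ[X]) ^ q - 1)) =
        ((∑ i ∈ Finset.range a, ((X : ℤ[X]) ^ p) ^ i) * ((X : ℤ[X]) ^ p - 1)) *
          ((∑ j ∈ Finset.range b, ((X : ℤ[X]) ^ q) ^ j) * ((X : ℤ[X]) ^ q - 1)) by ring,
      geom_sum_mul, geom_sum_mul, ← pow_mul, ← pow_mul, mul_comm p a, mul_comm q b]
  have hS2'' : (∑ i ∈ Finset.Icc a (q - 1), ∑ j ∈ Finset.Icc b (p - 1),
        (X : ℤ[X]) ^ (i * p + j * q - p * q)) *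
      ((((X : ℤ[X]) ^ p - 1) * ((X : ℤ[X]) ^ q - 1)) * (X : ℤ[X]) ^ (p * q)) =
      ((X : ℤ[X]) ^ (p * q) - (X : ℤ[X]) ^ (a * p)) *
        ((X : ℤ[X]) ^ (p * q) - (X : ℤ[X]) ^ (b * q)) := by
    have hIccq : Finset.Icc a (q - 1) = Finset.Ico a q := by
      rw [← Finset.Ico_add_one_right_eq_Icc]
      congr 1
      omega
    have hIccp : Finset.Icc b (p - 1) = Finset.Ico b p := by
      rw [← Finset.Ico_add_one_right_eq_Icc]
      congr 1
      omega
    have h2 : (∑ i ∈ Finset.Icc a (q - 1), ∑ j ∈ Finset.Icc b (p - 1),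
          (X : ℤ[X]) ^ (i * p + j * q - p * q)) * (X : ℤ[X]) ^ (p * q) =
        (∑ i ∈ Finset.Ico a q, ((X : ℤ[X]) ^ p) ^ i) *
          (∑ j ∈ Finset.Ico b p, ((X : ℤ[X]) ^ q) ^ j) := by
      rw [hIccq, hIccp, Finset.sum_mul_sum, Finset.sum_mul]
      refine Finset.sum_congr rfl fun i hi => ?_
      rw [Finset.sum_mul]
      refine Finset.sum_congr rfl fun j hj => ?_
      have hia : a ≤ i := (Finset.mem_Ico.mp hi).1
      have hjb : b ≤ j := (Finset.mem_Ico.mp hj).1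
      have hle : p * q ≤ i * p + j * q := by
        have h1 : a * p ≤ i * p := Nat.mul_le_mul_right p hia
        have h2 : b * q ≤ j * q := Nat.mul_le_mul_right q hjb
        omega
      rw [← pow_add, Nat.sub_add_cancel hle, pow_add, ← pow_mul, ← pow_mul,
        mul_comm p i, mul_comm q j]
    calc (∑ i ∈ Finset.Icc a (q - 1), ∑ j ∈ Finset.Icc b (p - 1),
          (X : ℤ[X]) ^ (i * p + j * q - p * q)) *
        ((((X : ℤ[X]) ^ p - 1) * ((X : ℤ[X]) ^ q - 1)) * (X : ℤ[X]) ^ (p * q))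
        = ((∑ i ∈ Finset.Icc a (q - 1), ∑ j ∈ Finset.Icc b (p - 1),
            (X : ℤ[X]) ^ (i * p + j * q - p * q)) * (X : ℤ[X]) ^ (p * q)) *
          (((X : ℤ[X]) ^ p - 1) * ((X : ℤ[X]) ^ q - 1)) := by ring
      _ = ((∑ i ∈ Finset.Ico a q, ((X : ℤ[X]) ^ p) ^ i) * ((X : ℤ[X]) ^ p - 1)) *
          ((∑ j ∈ Finset.Ico b p, ((X : ℤ[X]) ^ q) ^ j) * ((X : ℤ[X]) ^ q - 1)) := by
          rw [h2]; ring
      _ = (((X : ℤ[X]) ^ p) ^ q - ((X : ℤ[X]) ^ p) ^ a) *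
          (((X : ℤ[X]) ^ q) ^ p - ((X : ℤ[X]) ^ q) ^ b) := by
          rw [geom_sum_Ico_mul _ (le_of_lt haq), geom_sum_Ico_mul _ (le_of_lt hbp)]
      _ = ((X : ℤ[X]) ^ (p * q) - (X : ℤ[X]) ^ (a * p)) *
          ((X : ℤ[X]) ^ (p * q) - (X : ℤ[X]) ^ (b * q)) := by
          rw [← pow_mul, ← pow_mul, ← pow_mul, ← pow_mul, mul_comm p a, mul_comm q b,
            mul_comm q p]
  have hx : (X : ℤ[X]) ^ (a * p) * (X : ℤ[X]) ^ (b * q) = (X : ℤ[X]) ^ (p * q) * X := by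
    rw [← pow_add, hAB, pow_succ]
  linear_combination (X : ℤ[X]) ^ (p * q) * hcyc - (X : ℤ[X]) ^ (p * q) * hS1' + hS2'' +
    (1 - (X : ℤ[X]) ^ (p * q)) * hx
end

section
/- Let p and q be distinct primes, and let r and s be nonnegative integers satisfying r·p + s·q = (p-1)(q-1), (r+1)·p ≡ 1 (mod q), and (s+1)·q ≡ 1 (mod p). Then, as polynomials with integer coefficients, Φ_{pq}(X) = Σ_{i=0}^{r} Σ_{j=0}^{s} X^{ip+jq} − Σ_{i=r+1}^{q-1} Σ_{j=s+1}^{p-1} X^{ip+jq−pq}. -/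
open Polynomial Finset

theorem stmt_10 (p q : ℕ) (hp : p.Prime) (hq : q.Prime) (hpq : p ≠ q)
    (r s : ℕ) (hrs : r * p + s * q = (p - 1) * (q - 1))
    (hr : (r + 1) * p ≡ 1 [MOD q]) (hs : (s + 1) * q ≡ 1 [MOD p]) :
    Polynomial.cyclotomic (p * q) ℤ =
      (∑ i ∈ Finset.range (r + 1), ∑ j ∈ Finset.range (s + 1), (X : ℤ[X]) ^ (i * p + j * q)) -
        ∑ i ∈ Finset.Icc (r + 1) (q - 1), ∑ j ∈ Finset.Icc (s + 1) (p - 1),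
          (X : ℤ[X]) ^ (i * p + j * q - p * q) := by
  haveI := Fact.mk hp
  haveI := Fact.mk hq
  have hp2 := hp.two_le
  have hq2 := hq.two_le
  have hab : (r + 1) * p + (s + 1) * q = p * q + 1 := by
    zify [hp.one_le, hq.one_le] at hrs ⊢
    linear_combination hrs
  have hrq : r + 1 ≤ q := by nlinarith
  have hsp : s + 1 ≤ p := by nlinarith
  set A : ℤ[X] := ∑ i ∈ Finset.range (r + 1), ∑ j ∈ Finset.range (s + 1),
      (X : ℤ[X]) ^ (i * p + j * q) with hAdef
  set B : ℤ[X] := ∑ i ∈ Finset.Icc (r + 1) (q - 1), ∑ j ∈ Finset.Icc (s + 1) (p - 1),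
      (X : ℤ[X]) ^ (i * p + j * q - p * q) with hBdef
  -- the multiplier
  have hXp : ((X : ℤ[X]) ^ p - 1) ≠ 0 := by
    have := Polynomial.monic_X_pow_sub_C (1 : ℤ) (by omega : p ≠ 0)
    simpa using this.ne_zero
  have hXq : ((X : ℤ[X]) ^ q - 1) ≠ 0 := by
    have := Polynomial.monic_X_pow_sub_C (1 : ℤ) (by omega : q ≠ 0)
    simpa using this.ne_zero
  have hM : (((X : ℤ[X]) ^ p - 1) * ((X : ℤ[X]) ^ q - 1)) * (X : ℤ[X]) ^ (p * q) ≠ 0 :=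
    mul_ne_zero (mul_ne_zero hXp hXq) (pow_ne_zero _ X_ne_zero)
  apply mul_right_cancel₀ hM
  -- LHS
  have hndvd : ¬ q ∣ p := fun h => hpq ((Nat.prime_dvd_prime_iff_eq hq hp).mp h).symm
  have h1 : cyclotomic (p * q) ℤ * cyclotomic p ℤ = ∑ i ∈ range p, ((X : ℤ[X]) ^ q) ^ i := by
    rw [← cyclotomic_expand_eq_cyclotomic_mul hq hndvd ℤ, cyclotomic_prime, map_sum]
    simp only [map_pow, expand_X]
  have key1 : cyclotomic (p * q) ℤ * (((X : ℤ[X]) ^ p - 1) * ((X : ℤ[X]) ^ q - 1)) =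
      ((X : ℤ[X]) ^ (p * q) - 1) * (X - 1) := by
    calc cyclotomic (p * q) ℤ * (((X : ℤ[X]) ^ p - 1) * ((X : ℤ[X]) ^ q - 1))
        = (cyclotomic (p * q) ℤ * cyclotomic p ℤ) * ((X : ℤ[X]) ^ q - 1) * (X - 1) := by
          rw [← cyclotomic_prime_mul_X_sub_one ℤ p]; ring
      _ = (∑ i ∈ range p, ((X : ℤ[X]) ^ q) ^ i) * ((X : ℤ[X]) ^ q - 1) * (X - 1) := by rw [h1]
      _ = (((X : ℤ[X]) ^ q) ^ p - 1) * (X - 1) := by rw [geom_sum_mul]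
      _ = ((X : ℤ[X]) ^ (p * q) - 1) * (X - 1) := by rw [← pow_mul, mul_comm q p]
  -- A
  have hA : A * (((X : ℤ[X]) ^ p - 1) * ((X : ℤ[X]) ^ q - 1)) =
      ((X : ℤ[X]) ^ ((r + 1) * p) - 1) * ((X : ℤ[X]) ^ ((s + 1) * q) - 1) := by
    have : A = (∑ i ∈ range (r + 1), ((X : ℤ[X]) ^ p) ^ i) *
        (∑ j ∈ range (s + 1), ((X : ℤ[X]) ^ q) ^ j) := by
      rw [Finset.sum_mul_sum]
      refine Finset.sum_congr rfl fun i _ => Finset.sum_congr rfl fun j _ => ?_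
      rw [pow_add, mul_comm i p, mul_comm j q, pow_mul, pow_mul]
    rw [this, show (∑ i ∈ range (r + 1), ((X : ℤ[X]) ^ p) ^ i) *
        (∑ j ∈ range (s + 1), ((X : ℤ[X]) ^ q) ^ j) *
        (((X : ℤ[X]) ^ p - 1) * ((X : ℤ[X]) ^ q - 1)) =
        ((∑ i ∈ range (r + 1), ((X : ℤ[X]) ^ p) ^ i) * ((X : ℤ[X]) ^ p - 1)) *
        ((∑ j ∈ range (s + 1), ((X : ℤ[X]) ^ q) ^ j) * ((X : ℤ[X]) ^ q - 1)) from by ring,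
      geom_sum_mul, geom_sum_mul, ← pow_mul, ← pow_mul, mul_comm p (r+1), mul_comm q (s+1)]
  -- B
  have hB : (B * (X : ℤ[X]) ^ (p * q)) * (((X : ℤ[X]) ^ p - 1) * ((X : ℤ[X]) ^ q - 1)) =
      ((X : ℤ[X]) ^ (p * q) - (X : ℤ[X]) ^ ((r + 1) * p)) *
      ((X : ℤ[X]) ^ (p * q) - (X : ℤ[X]) ^ ((s + 1) * q)) := by
    have hB1 : B * (X : ℤ[X]) ^ (p * q) =
        (∑ i ∈ Finset.Icc (r + 1) (q - 1), ((X : ℤ[X]) ^ p) ^ i) *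
        (∑ j ∈ Finset.Icc (s + 1) (p - 1), ((X : ℤ[X]) ^ q) ^ j) := by
      rw [Finset.sum_mul_sum, hBdef, Finset.sum_mul]
      refine Finset.sum_congr rfl fun i hi => ?_
      rw [Finset.sum_mul]
      refine Finset.sum_congr rfl fun j hj => ?_
      obtain ⟨hi1, _⟩ := Finset.mem_Icc.mp hi
      obtain ⟨hj1, _⟩ := Finset.mem_Icc.mp hj
      have hge : p * q ≤ i * p + j * q := by
        calc p * q ≤ (r + 1) * p + (s + 1) * q := by omega
          _ ≤ i * p + j * q := Nat.add_le_add (Nat.mul_le_mul_right p hi1)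
              (Nat.mul_le_mul_right q hj1)
      rw [← pow_add, Nat.sub_add_cancel hge, pow_add, mul_comm i p, mul_comm j q,
        pow_mul, pow_mul]
    have hIcc1 : Finset.Icc (r + 1) (q - 1) = Finset.Ico (r + 1) q := by
      rw [← Finset.Ico_add_one_right_eq_Icc]; congr 1; omega
    have hIcc2 : Finset.Icc (s + 1) (p - 1) = Finset.Ico (s + 1) p := by
      rw [← Finset.Ico_add_one_right_eq_Icc]; congr 1; omega
    have hS1 : (∑ i ∈ Finset.Icc (r + 1) (q - 1), ((X : ℤ[X]) ^ p) ^ i) *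
        ((X : ℤ[X]) ^ p - 1) = (X : ℤ[X]) ^ (p * q) - (X : ℤ[X]) ^ ((r + 1) * p) := by
      rw [hIcc1, Finset.sum_Ico_eq_sub _ hrq, sub_mul, geom_sum_mul, geom_sum_mul,
        sub_sub_sub_cancel_right, ← pow_mul, ← pow_mul, mul_comm p (r + 1)]
    have hS2 : (∑ j ∈ Finset.Icc (s + 1) (p - 1), ((X : ℤ[X]) ^ q) ^ j) *
        ((X : ℤ[X]) ^ q - 1) = (X : ℤ[X]) ^ (p * q) - (X : ℤ[X]) ^ ((s + 1) * q) := by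
      rw [hIcc2, Finset.sum_Ico_eq_sub _ hsp, sub_mul, geom_sum_mul, geom_sum_mul,
        sub_sub_sub_cancel_right, ← pow_mul, ← pow_mul, mul_comm q p, mul_comm q (s + 1)]
    calc (B * (X : ℤ[X]) ^ (p * q)) * (((X : ℤ[X]) ^ p - 1) * ((X : ℤ[X]) ^ q - 1))
        = ((∑ i ∈ Finset.Icc (r + 1) (q - 1), ((X : ℤ[X]) ^ p) ^ i) * ((X : ℤ[X]) ^ p - 1)) *
          ((∑ j ∈ Finset.Icc (s + 1) (p - 1), ((X : ℤ[X]) ^ q) ^ j) * ((X : ℤ[X]) ^ q - 1)) := by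
          rw [hB1]; ring
      _ = _ := by rw [hS1, hS2]
  -- pure power identity
  have hpure : ((X : ℤ[X]) ^ ((r + 1) * p) - 1) * ((X : ℤ[X]) ^ ((s + 1) * q) - 1) *
      (X : ℤ[X]) ^ (p * q) -
      ((X : ℤ[X]) ^ (p * q) - (X : ℤ[X]) ^ ((r + 1) * p)) *
      ((X : ℤ[X]) ^ (p * q) - (X : ℤ[X]) ^ ((s + 1) * q)) =
      ((X : ℤ[X]) ^ (p * q) - 1) * (X - 1) * (X : ℤ[X]) ^ (p * q) := by
    obtain ⟨a, ha⟩ : ∃ a, (r + 1) * p = a + 1 := ⟨(r + 1) * p - 1, by have : 0 < (r + 1) * p := Nat.mul_pos (by omega) hp.pos; omega⟩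
    have hN : p * q = a + (s + 1) * q := by rw [ha] at hab; omega
    rw [ha, hN]
    ring
  calc cyclotomic (p * q) ℤ * ((((X : ℤ[X]) ^ p - 1) * ((X : ℤ[X]) ^ q - 1)) * (X : ℤ[X]) ^ (p * q))
      = cyclotomic (p * q) ℤ * (((X : ℤ[X]) ^ p - 1) * ((X : ℤ[X]) ^ q - 1)) *
        (X : ℤ[X]) ^ (p * q) := by ring
    _ = ((X : ℤ[X]) ^ (p * q) - 1) * (X - 1) * (X : ℤ[X]) ^ (p * q) := by rw [key1]
    _ = ((X : ℤ[X]) ^ ((r + 1) * p) - 1) * ((X : ℤ[X]) ^ ((s + 1) * q) - 1) *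
        (X : ℤ[X]) ^ (p * q) -
        ((X : ℤ[X]) ^ (p * q) - (X : ℤ[X]) ^ ((r + 1) * p)) *
        ((X : ℤ[X]) ^ (p * q) - (X : ℤ[X]) ^ ((s + 1) * q)) := hpure.symm
    _ = A * (((X : ℤ[X]) ^ p - 1) * ((X : ℤ[X]) ^ q - 1)) * (X : ℤ[X]) ^ (p * q) -
        (B * (X : ℤ[X]) ^ (p * q)) * (((X : ℤ[X]) ^ p - 1) * ((X : ℤ[X]) ^ q - 1)) := by
          rw [hA, hB]
    _ = (A - B) * ((((X : ℤ[X]) ^ p - 1) * ((X : ℤ[X]) ^ q - 1)) * (X : ℤ[X]) ^ (p * q)) := by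
          ring
end

section
/- Let p and q be distinct primes with p > q. Then the two explicit expressions for the pq-th cyclotomic polynomial coincide as polynomials with integer coefficients: 1 + (X - 1) · Σ_{i=0}^{q-1} Σ_{j=1}^{⌊pi/q⌋} X^{pi − qj} = Σ_{i=0}^{[p^{q-2}]_q − 1} Σ_{j=0}^{[q^{p-2}]_p − 1} X^{ip+jq} − Σ_{i=[p^{q-2}]_q}^{q-1} Σ_{j=[q^{p-2}]_p}^{p-1} X^{ip+jq−pq}. -/
open Polynomial Finset


-- check telescoping lemmas
lemma tel_range (c n : ℕ) :
    (∑ i ∈ Finset.range n, (X:ℤ[X])^(i*c)) * (X^c - 1) = X^(n*c) - 1 := by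
  induction n with
  | zero => simp
  | succ n ih =>
    rw [Finset.sum_range_succ, add_mul, ih, Nat.succ_mul, mul_sub, mul_one, ← pow_add]
    ring

lemma tel_Icc (c a b : ℕ) (h : a ≤ b + 1) :
    (∑ i ∈ Finset.Icc a b, (X:ℤ[X])^(i*c)) * (X^c - 1) = X^((b+1)*c) - X^(a*c) := by
  rw [← Finset.Ico_add_one_right_eq_Icc, Finset.sum_Ico_eq_sub _ h, sub_mul, tel_range, tel_range]
  ring

lemma tel_inner (c e : ℕ) : ∀ m : ℕ, c * m ≤ e →
    (∑ j ∈ Finset.Icc 1 m, (X:ℤ[X])^(e - c*j)) * (X^c - 1) = X^e - X^(e - c*m) := by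
  intro m
  induction m with
  | zero => intro _; simp
  | succ m ih =>
    intro h
    rw [Nat.mul_succ] at h
    have h' : c * m ≤ e := by omega
    rw [Finset.sum_Icc_succ_top (by omega : 1 ≤ m+1), add_mul, ih h', Nat.mul_succ,
      mul_sub, mul_one, ← pow_add]
    have he : e - (c*m + c) + c = e - c*m := by omega
    rw [he]
    ring

lemma mem_aux {q : ℕ} (hq : q.Prime) {c i : ℕ} (hc : ¬ q ∣ c) (hi : i ∈ Finset.Icc 1 (q-1)) :
    (c * i) % q ∈ Finset.Icc 1 (q-1) := by
  have hq2 := hq.two_le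
  rw [Finset.mem_Icc] at hi ⊢
  have hlt : (c * i) % q < q := Nat.mod_lt _ (by omega)
  have hne : (c * i) % q ≠ 0 := by
    intro h
    have hdvd : q ∣ c * i := Nat.dvd_iff_mod_eq_zero.mpr h
    rcases (Nat.Prime.dvd_mul hq).mp hdvd with h1 | h2
    · exact hc h1
    · have := Nat.le_of_dvd (by omega) h2; omega
  omega

lemma inv_aux {q c d : ℕ} (hq2 : 2 ≤ q) (hcd : c * d ≡ 1 [MOD q]) {i : ℕ} (hi : i < q) :
    (c * ((d * i) % q)) % q = i := by
  have h1 : c * ((d * i) % q) ≡ c * (d * i) [MOD q] := (Nat.mod_modEq (d*i) q).mul_left c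
  have h2 : c * (d * i) = (c * d) * i := by ring
  have h3 : (c*d) * i ≡ 1 * i [MOD q] := hcd.mul_right i
  have h4 : c * ((d * i) % q) ≡ 1 * i [MOD q] := h1.trans (h2 ▸ h3)
  have h5 : (c * ((d * i) % q)) % q = (1*i) % q := h4
  rwa [one_mul, Nat.mod_eq_of_lt hi] at h5

lemma reindex {p q : ℕ} (hq : q.Prime) (hnd : ¬ q ∣ p) {a : ℕ} (hpa : p * a ≡ 1 [MOD q]) :
    ∑ i ∈ Finset.Icc 1 (q-1), (X:ℤ[X])^((p*i) % q) = ∑ r ∈ Finset.Icc 1 (q-1), (X:ℤ[X])^r := by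
  have hq2 := hq.two_le
  have hna : ¬ q ∣ a := by
    intro h
    have h0 : (0:ℕ) ≡ 1 [MOD q] := ((Nat.modEq_zero_iff_dvd).mpr (h.mul_left p)).symm.trans hpa
    have h5 : 0 % q = 1 % q := h0
    rw [Nat.zero_mod, Nat.mod_eq_of_lt (show 1 < q by omega)] at h5
    omega
  have hap : a * p ≡ 1 [MOD q] := by rwa [mul_comm] at hpa
  refine Finset.sum_nbij' (fun i => (p * i) % q) (fun r => (a * r) % q)
    (fun i hi => mem_aux hq hnd hi) (fun r hr => mem_aux hq hna hr)
    (fun i hi => ?_) (fun r hr => ?_) (fun i hi => rfl)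
  · rw [Finset.mem_Icc] at hi
    exact inv_aux hq2 hap (by omega)
  · rw [Finset.mem_Icc] at hr
    exact inv_aux hq2 hpa (by omega)

lemma numkey {p q : ℕ} (hp : p.Prime) (hq : q.Prime) (hgt : p > q) :
    (p ^ (q-2) % q) * p + (q ^ (p-2) % p) * q = p * q + 1 ∧
    p * (p ^ (q-2) % q) ≡ 1 [MOD q] ∧ q * (q ^ (p-2) % p) ≡ 1 [MOD p] ∧
    1 ≤ p ^ (q-2) % q ∧ p ^ (q-2) % q < q ∧ 1 ≤ q ^ (p-2) % p ∧ q ^ (p-2) % p < p := by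
  have hp2 := hp.two_le
  have hq2 := hq.two_le
  have hne : p ≠ q := by omega
  have hcop : Nat.Coprime p q := (Nat.coprime_primes hp hq).mpr hne
  set a := p ^ (q-2) % q with hadef
  set b := q ^ (p-2) % p with hbdef
  have hpa : p * a ≡ 1 [MOD q] := by
    have h1 : p * a ≡ p * p ^ (q-2) [MOD q] := (Nat.mod_modEq _ q).mul_left p
    have h2 : p * p ^ (q-2) = p ^ (q-1) := by
      rw [← pow_succ']; congr 1; omega
    have h3 : p ^ (q-1) ≡ 1 [MOD q] := by
      have := Nat.ModEq.pow_totient hcop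
      rwa [Nat.totient_prime hq] at this
    exact (h2 ▸ h1).trans h3
  have hqb : q * b ≡ 1 [MOD p] := by
    have h1 : q * b ≡ q * q ^ (p-2) [MOD p] := (Nat.mod_modEq _ p).mul_left q
    have h2 : q * q ^ (p-2) = q ^ (p-1) := by
      rw [← pow_succ']; congr 1; omega
    have h3 : q ^ (p-1) ≡ 1 [MOD p] := by
      have := Nat.ModEq.pow_totient hcop.symm
      rwa [Nat.totient_prime hp] at this
    exact (h2 ▸ h1).trans h3
  have haq : a < q := Nat.mod_lt _ (by omega)
  have hbp : b < p := Nat.mod_lt _ (by omega)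
  have ha1 : 1 ≤ a := by
    rcases Nat.eq_zero_or_pos a with h | h
    · exfalso
      have h5 : p * a % q = 1 % q := hpa
      rw [h, mul_zero, Nat.zero_mod, Nat.mod_eq_of_lt (show 1 < q by omega)] at h5
      omega
    · exact h
  have hb1 : 1 ≤ b := by
    rcases Nat.eq_zero_or_pos b with h | h
    · exfalso
      have h5 : q * b % p = 1 % p := hqb
      rw [h, mul_zero, Nat.zero_mod, Nat.mod_eq_of_lt (show 1 < p by omega)] at h5
      omega
    · exact h
  have hmodq : p * a + q * b ≡ 1 [MOD q] := by
    have : p * a + q * b ≡ 1 + 0 [MOD q] :=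
      hpa.add ((Nat.modEq_zero_iff_dvd).mpr ⟨b, rfl⟩)
    simpa using this
  have hmodp : p * a + q * b ≡ 1 [MOD p] := by
    have : p * a + q * b ≡ 0 + 1 [MOD p] :=
      (Nat.ModEq.add ((Nat.modEq_zero_iff_dvd).mpr ⟨a, rfl⟩) hqb)
    simpa using this
  have hmodpq : p * a + q * b ≡ 1 [MOD p * q] :=
    (Nat.modEq_and_modEq_iff_modEq_mul hcop).mp ⟨hmodp, hmodq⟩
  have hlb : p + q ≤ p * a + q * b := by nlinarith
  have hdvd : p * q ∣ (p * a + q * b) - 1 :=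
    (Nat.modEq_iff_dvd' (by omega)).mp hmodpq.symm
  obtain ⟨k, hk⟩ := hdvd
  have hub : p * a + q * b ≤ p * (q-1) + q * (p-1) := by
    have h1 := Nat.mul_le_mul_left p (by omega : a ≤ q - 1)
    have h2 := Nat.mul_le_mul_left q (by omega : b ≤ p - 1)
    omega
  have hsub : p * a + q * b - 1 + 1 = p * a + q * b := Nat.sub_add_cancel (by omega)
  have e1 : p * (q-1) + p = p * q := by rw [← Nat.mul_succ]; congr 1; omega
  have e2 : q * (p-1) + q = q * p := by rw [← Nat.mul_succ]; congr 1; omega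
  have e3 : q * p = p * q := mul_comm q p
  have hk1 : p * a + q * b = p * q + 1 := by
    rcases k with _ | _ | k
    · exfalso; simp at hk; omega
    · norm_num at hk; linarith
    · exfalso
      have hfact : p * q * 2 ≤ p * q * (k + 1 + 1) := Nat.mul_le_mul le_rfl (by omega)
      linarith
  exact ⟨by linarith [mul_comm a p, mul_comm b q], hpa, hqb, ha1, haq, hb1, hbp⟩

theorem stmt_11 (p q : ℕ) (hp : p.Prime) (hq : q.Prime) (hgt : p > q) :
    1 + (X - 1) *
        ∑ i ∈ Finset.range q, ∑ j ∈ Finset.Icc 1 (p * i / q), (X : ℤ[X]) ^ (p * i - q * j) =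
      (∑ i ∈ Finset.range (p ^ (q - 2) % q), ∑ j ∈ Finset.range (q ^ (p - 2) % p),
          (X : ℤ[X]) ^ (i * p + j * q)) -
        ∑ i ∈ Finset.Icc (p ^ (q - 2) % q) (q - 1), ∑ j ∈ Finset.Icc (q ^ (p - 2) % p) (p - 1),
          (X : ℤ[X]) ^ (i * p + j * q - p * q) := by
  have hp2 := hp.two_le
  have hq2 := hq.two_le
  obtain ⟨key, hpa, hqb, ha1, haq, hb1, hbp⟩ := numkey hp hq hgt
  set a := p ^ (q - 2) % q with hadef
  set b := q ^ (p - 2) % p with hbdef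
  have hX1 : ∀ c : ℕ, 0 < c → ((X:ℤ[X])^c - 1) ≠ 0 := by
    intro c hc h
    have h2 := congrArg (Polynomial.eval 0) h
    simp [zero_pow hc.ne'] at h2
  have hE : (((X:ℤ[X])^p - 1) * ((X:ℤ[X])^q - 1)) * (X:ℤ[X])^(p*q) ≠ 0 :=
    mul_ne_zero (mul_ne_zero (hX1 p (by omega)) (hX1 q (by omega))) (pow_ne_zero _ X_ne_zero)
  apply mul_right_cancel₀ hE
  -- Part A facts
  have eqP : (∑ i ∈ Finset.range q, (X:ℤ[X])^(i*p)) * (X^p - 1) = X^(q*p) - 1 := tel_range p q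
  have eqT : (∑ i ∈ Finset.range q, ∑ j ∈ Finset.Icc 1 (p*i/q), (X:ℤ[X])^(p*i - q*j)) * (X^q - 1)
      = (∑ i ∈ Finset.range q, (X:ℤ[X])^(i*p)) - (∑ i ∈ Finset.range q, (X:ℤ[X])^((p*i) % q)) := by
    rw [Finset.sum_mul, ← Finset.sum_sub_distrib]
    refine Finset.sum_congr rfl fun i hi => ?_
    have hle : q * (p*i/q) ≤ p*i :=
      le_trans (Nat.le_add_left _ _) (le_of_eq (Nat.mod_add_div (p*i) q))
    rw [tel_inner q (p*i) (p*i/q) hle]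
    congr 1
    · congr 1
      exact mul_comm p i
    · congr 1
      exact Nat.sub_eq_of_eq_add (Nat.mod_add_div (p*i) q).symm
  have eqR : (∑ i ∈ Finset.range q, (X:ℤ[X])^((p*i) % q)) * (X - 1) = X^q - 1 := by
    have hsplit : ∀ f : ℕ → ℤ[X],
        ∑ i ∈ Finset.range q, f i = f 0 + ∑ i ∈ Finset.Icc 1 (q-1), f i := by
      intro f
      have h : Finset.range q = insert 0 (Finset.Icc 1 (q-1)) := by
        ext x; simp [Finset.mem_Icc]; omega
      rw [h, Finset.sum_insert (by simp)]
    have hnd : ¬ q ∣ p := by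
      intro h
      rcases (Nat.Prime.eq_one_or_self_of_dvd hp q h) with h1 | h1 <;> omega
    have hRe : (∑ i ∈ Finset.range q, (X:ℤ[X])^((p*i) % q))
        = ∑ i ∈ Finset.range q, (X:ℤ[X])^i := by
      rw [hsplit, hsplit, reindex hq hnd hpa]
      norm_num
    rw [hRe]
    simpa using tel_range 1 q
  have hA : (1 + (X - 1) *
        ∑ i ∈ Finset.range q, ∑ j ∈ Finset.Icc 1 (p * i / q), (X : ℤ[X]) ^ (p * i - q * j)) *
        ((((X:ℤ[X])^p - 1) * ((X:ℤ[X])^q - 1)) * (X:ℤ[X])^(p*q))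
      = ((X:ℤ[X])^(p*q) - 1) * (X - 1) * X^(p*q) := by
    linear_combination ((X:ℤ[X])^(p*q) * (X-1) * (X^p-1)) * eqT
      + ((X:ℤ[X])^(p*q) * (X-1)) * eqP - ((X:ℤ[X])^(p*q) * (X^p-1)) * eqR
  -- Part B facts
  have f1 : (∑ i ∈ Finset.range a, ∑ j ∈ Finset.range b, (X:ℤ[X])^(i*p+j*q))
      = (∑ i ∈ Finset.range a, (X:ℤ[X])^(i*p)) * (∑ j ∈ Finset.range b, (X:ℤ[X])^(j*q)) := by
    rw [Finset.sum_mul_sum]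
    exact Finset.sum_congr rfl fun i _ => Finset.sum_congr rfl fun j _ => pow_add _ _ _
  have f2 : (∑ i ∈ Finset.range a, (X:ℤ[X])^(i*p)) * (X^p - 1) = X^(a*p) - 1 := tel_range p a
  have f3 : (∑ j ∈ Finset.range b, (X:ℤ[X])^(j*q)) * (X^q - 1) = X^(b*q) - 1 := tel_range q b
  have f4 : (∑ i ∈ Finset.Icc a (q-1), ∑ j ∈ Finset.Icc b (p-1),
        (X:ℤ[X])^(i*p+j*q-p*q)) * X^(p*q)
      = (∑ i ∈ Finset.Icc a (q-1), (X:ℤ[X])^(i*p)) *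
        (∑ j ∈ Finset.Icc b (p-1), (X:ℤ[X])^(j*q)) := by
    rw [Finset.sum_mul_sum, Finset.sum_mul]
    refine Finset.sum_congr rfl fun i hi => ?_
    rw [Finset.sum_mul]
    refine Finset.sum_congr rfl fun j hj => ?_
    rw [← pow_add, ← pow_add]
    congr 1
    rw [Finset.mem_Icc] at hi hj
    have h1 : a*p ≤ i*p := Nat.mul_le_mul hi.1 le_rfl
    have h2 : b*q ≤ j*q := Nat.mul_le_mul hj.1 le_rfl
    have hge : p*q ≤ i*p + j*q := by linarith
    exact Nat.sub_add_cancel hge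
  have f5 : (∑ i ∈ Finset.Icc a (q-1), (X:ℤ[X])^(i*p)) * (X^p - 1)
      = X^(q*p) - X^(a*p) := by
    have h := tel_Icc p a (q-1) (by omega)
    rwa [show q-1+1 = q by omega] at h
  have f6 : (∑ j ∈ Finset.Icc b (p-1), (X:ℤ[X])^(j*q)) * (X^q - 1)
      = X^(p*q) - X^(b*q) := by
    have h := tel_Icc q b (p-1) (by omega)
    rwa [show p-1+1 = p by omega] at h
  have hab : (X:ℤ[X])^(a*p) * (X:ℤ[X])^(b*q) = X^(p*q+1) := by
    rw [← pow_add, key]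
  have hB : ((∑ i ∈ Finset.range a, ∑ j ∈ Finset.range b, (X:ℤ[X])^(i*p+j*q)) -
        ∑ i ∈ Finset.Icc a (q-1), ∑ j ∈ Finset.Icc b (p-1), (X:ℤ[X])^(i*p+j*q-p*q)) *
        ((((X:ℤ[X])^p - 1) * ((X:ℤ[X])^q - 1)) * (X:ℤ[X])^(p*q))
      = ((X:ℤ[X])^(p*q) - 1) * (X - 1) * X^(p*q) := by
    linear_combination ((((X:ℤ[X])^p - 1) * ((X:ℤ[X])^q - 1)) * (X:ℤ[X])^(p*q)) * f1
      + ((X:ℤ[X])^(p*q) * ((∑ j ∈ Finset.range b, (X:ℤ[X])^(j*q)) * (X^q - 1))) * f2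
      + ((X:ℤ[X])^(p*q) * (X^(a*p) - 1)) * f3
      - (((X:ℤ[X])^p - 1) * ((X:ℤ[X])^q - 1)) * f4
      - ((∑ j ∈ Finset.Icc b (p-1), (X:ℤ[X])^(j*q)) * (X^q - 1)) * f5
      - ((X:ℤ[X])^(q*p) - X^(a*p)) * f6
      + ((X:ℤ[X])^(p*q) - 1) * hab
  exact hA.trans hB.symm
end
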